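/- arXiv:1604.06815 — 5 statements merged into one kernel-verified Lean document; each statement's English description precedes it below -/
import Mathlib

section
/- Pointwise decomposition of the TREX objective: for every β ∈ ℝ^p such that Xᵀ(Y − Xβ) ≠ 0, one has f(β)/φ = min over all pairs (j, s) with j ∈ {1,…,p}, s ∈ {−1, +1} and s·φ·x_jᵀ(Y − Xβ) > 0 of the value ‖Y − Xβ‖₂²/(s·φ·x_jᵀ(Y − Xβ)) + ‖β‖₁; in particular the minimum is taken over a nonempty set of pairs. -/
open Matrix BigOperators

/-!
Write `r = Xᵀ(Y − Xβ)`. The admissible denominators `s·φ·r_j` are exactly the positive numbers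
among `±φ·r_j`, so their largest value is `φ·‖r‖_∞`, attained at a coordinate of maximal modulus
with `s` its sign. Since `d ↦ ‖Y − Xβ‖₂²/d + ‖β‖₁` is antitone on `d > 0`, the largest denominator
gives the smallest value, and that value is `f(β)/φ`.
-/

def posSignedMultiples {ι : Type*} (c : ℝ) (r : ι → ℝ) : Set ℝ :=
  {d | ∃ (j : ι) (s : ℝ), (s = 1 ∨ s = -1) ∧ 0 < s * c * r j ∧ d = s * c * r j}

theorem posSignedMultiples_subset_Ioi {ι : Type*} (c : ℝ) (r : ι → ℝ) :
    posSignedMultiples c r ⊆ Set.Ioi 0 := by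
  rintro _ ⟨j, s, -, hpos, rfl⟩
  exact hpos

theorem isGreatest_posSignedMultiples {ι : Type*} [Finite ι] {c : ℝ} (hc : 0 < c)
    {r : ι → ℝ} (hr : r ≠ 0) :
    IsGreatest (posSignedMultiples c r) (c * ⨆ j, |r j|) := by
  obtain ⟨j₁, hj₁⟩ := Function.ne_iff.mp hr
  have : Nonempty ι := ⟨j₁⟩
  obtain ⟨j₀, hj₀⟩ := exists_eq_ciSup_of_finite (f := fun j => |r j|)
  have hbdd : BddAbove (Set.range fun j => |r j|) := (Set.finite_range _).bddAbove
  have hle : ∀ j, |r j| ≤ |r j₀| := fun j => hj₀ ▸ le_ciSup hbdd j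
  have hmax_pos : 0 < c * |r j₀| := mul_pos hc ((abs_pos.mpr hj₁).trans_le (hle j₁))
  rw [← hj₀]
  constructor
  · obtain ⟨s, hs, hsr⟩ : ∃ s : ℝ, (s = 1 ∨ s = -1) ∧ s * r j₀ = |r j₀| := by
      rcases abs_choice (r j₀) with habs | habs
      · exact ⟨1, Or.inl rfl, by rw [habs, one_mul]⟩
      · exact ⟨-1, Or.inr rfl, by rw [habs, neg_one_mul]⟩
    have hsc : s * c * r j₀ = c * |r j₀| := by rw [← hsr]; ring
    exact ⟨j₀, s, hs, hsc ▸ hmax_pos, hsc.symm⟩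
  · rintro _ ⟨j, s, hs, -, rfl⟩
    have hsr : s * r j ≤ |r j| := by rcases hs with rfl | rfl <;> simp [le_abs_self, neg_le_abs]
    calc s * c * r j = c * (s * r j) := by ring
      _ ≤ c * |r j₀| := mul_le_mul_of_nonneg_left (hsr.trans (hle j)) hc.le

theorem antitoneOn_div_add {a : ℝ} (ha : 0 ≤ a) (b : ℝ) :
    AntitoneOn (fun d : ℝ => a / d + b) (Set.Ioi 0) := fun _ hx _ _ hxy =>
  add_le_add_left (div_le_div_of_nonneg_left ha hx hxy) b

/-- **Pointwise decomposition of the TREX objective.**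
For every `β` such that `Xᵀ(Y − Xβ) ≠ 0`, the value `f(β)/φ`, where
`f(β) = ‖Y − Xβ‖₂²/‖Xᵀ(Y − Xβ)‖_∞ + φ‖β‖₁`, is the minimum (in the sense of `IsLeast`,
so in particular the set of candidate values is nonempty) over all pairs `(j, s)` with
`j ∈ {1,…,p}`, `s ∈ {−1, +1}` and `s·φ·x_jᵀ(Y − Xβ) > 0` of
`‖Y − Xβ‖₂²/(s·φ·x_jᵀ(Y − Xβ)) + ‖β‖₁`. -/
theorem trex_pointwise_decomposition
    (n p : ℕ) (X : Matrix (Fin n) (Fin p) ℝ) (Y : Fin n → ℝ)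
    (φ : ℝ) (hφ : 0 < φ) (β : Fin p → ℝ)
    (h : Xᵀ.mulVec (Y - X.mulVec β) ≠ 0) :
    IsLeast
      { v : ℝ | ∃ (j : Fin p) (s : ℝ), (s = 1 ∨ s = -1) ∧
          0 < s * φ * (Xᵀ.mulVec (Y - X.mulVec β)) j ∧
          v = (∑ i, (Y i - X.mulVec β i) ^ 2) /
                (s * φ * (Xᵀ.mulVec (Y - X.mulVec β)) j) + ∑ k, |β k| }
      (((∑ i, (Y i - X.mulVec β i) ^ 2) /
          (⨆ j, |(Xᵀ.mulVec (Y - X.mulVec β)) j|) + φ * ∑ k, |β k|) / φ) := by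
  set r := Xᵀ.mulVec (Y - X.mulVec β)
  set S := ∑ i, (Y i - X.mulVec β i) ^ 2
  set L := ∑ k, |β k|
  have hS : 0 ≤ S := Finset.sum_nonneg fun i _ => sq_nonneg _
  have hset : {v : ℝ | ∃ (j : Fin p) (s : ℝ), (s = 1 ∨ s = -1) ∧ 0 < s * φ * r j ∧
      v = S / (s * φ * r j) + L} = (fun d => S / d + L) '' posSignedMultiples φ r := by
    ext v
    constructor
    · rintro ⟨j, s, hs, hpos, rfl⟩
      exact ⟨_, ⟨j, s, hs, hpos, rfl⟩, rfl⟩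
    · rintro ⟨_, ⟨j, s, hs, hpos, rfl⟩, rfl⟩
      exact ⟨j, s, hs, hpos, rfl⟩
  have hvalue : (S / (⨆ j, |r j|) + φ * L) / φ = S / (φ * ⨆ j, |r j|) + L := by
    rw [add_div, div_div, mul_div_cancel_left₀ L hφ.ne', mul_comm]
  rw [hset, hvalue]
  exact ((antitoneOn_div_add hS L).mono (posSignedMultiples_subset_Ioi φ r)).map_isGreatest
    (isGreatest_posSignedMultiples hφ h)
end

section
/- Correctness of the c-TREX reduction: the global infimum of the (rescaled) TREX problem equals the minimum of 2p convex subproblem values. Precisely, with values taken in [0, ∞], P* := inf over {β ∈ ℝ^p : Xᵀ(Y − Xβ) ≠ 0} of [‖Y − Xβ‖₂²/(φ‖Xᵀ(Y − Xβ)‖_∞) + ‖β‖₁] satisfies P* = min over j ∈ {1,…,p} and s ∈ {−1, +1} of P*(s·φ·x_j), where for nonzero v ∈ ℝ^n, P*(v) := inf over {β ∈ ℝ^p : vᵀ(Y − Xβ) > 0} of [‖Y − Xβ‖₂²/(vᵀ(Y − Xβ)) + ‖β‖₁] (an infimum over an empty set being +∞). -/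
open Matrix BigOperators ENNReal

/-- The value `P*(v)` of the convex TREX subproblem associated with a vector `v`:
the infimum (in `[0,∞]`) over `{β : vᵀ(Y − Xβ) > 0}` of
`‖Y − Xβ‖₂²/(vᵀ(Y − Xβ)) + ‖β‖₁`; the infimum over an empty set is `+∞`. -/
noncomputable def trexSubproblemValue (n p : ℕ) (X : Matrix (Fin n) (Fin p) ℝ)
    (Y : Fin n → ℝ) (v : Fin n → ℝ) : ℝ≥0∞ :=
  ⨅ β ∈ {β : Fin p → ℝ | 0 < ∑ i, v i * (Y i - X.mulVec β i)},
    ENNReal.ofReal ((∑ i, (Y i - X.mulVec β i) ^ 2) /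
      (∑ i, v i * (Y i - X.mulVec β i)) + ∑ k, |β k|)

/-!
For fixed `β` with `g := Xᵀ(Y − Xβ) ≠ 0`, the sup-norm `‖g‖_∞` is attained as `s·g_j` for some `j`
and `s = ±1`, and every positive `s·g_j` is at most `‖g‖_∞`. As the numerator `‖Y − Xβ‖₂²` is
nonnegative, dividing by the largest positive denominator gives the smallest value, so the TREX
objective at `β` is the minimum over the `(j, s)` with `s·φ·g_j > 0` of the subproblem objectives
for `v = s·φ·x_j`. The infima over `β` and over `(j, s)` then commute.
-/

lemma Finite.exists_abs_eq_ciSup_abs {ι : Type*} [Finite ι] {v : ι → ℝ} (hv : v ≠ 0) :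
    ∃ j, 0 < |v j| ∧ ⨆ k, |v k| = |v j| := by
  obtain ⟨j₀, hj₀⟩ := Function.ne_iff.mp hv
  have : Nonempty ι := ⟨j₀⟩
  obtain ⟨j, hj⟩ := Finite.exists_max (fun k => |v k|)
  exact ⟨j, (abs_pos.2 hj₀).trans_le (hj j₀),
    le_antisymm (ciSup_le hj) (Finite.le_ciSup (fun k => |v k|) j)⟩

section InfDivSupAbs

variable {B ι : Type*} [Finite ι] (g : B → ι → ℝ) {A : B → ℝ} (L : B → ℝ)

lemma iInf_div_ciSup_abs_le (hA : ∀ β, 0 ≤ A β) {β : B} {j : ι} {d : ℝ} (hd : 0 < d)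
    (hdj : d ≤ |g β j|) :
    ⨅ β ∈ {β | g β ≠ 0}, ENNReal.ofReal (A β / (⨆ k, |g β k|) + L β)
      ≤ ENNReal.ofReal (A β / d + L β) := by
  have hne : g β ≠ 0 := fun h => by
    rw [congrFun h j, Pi.zero_apply, abs_zero] at hdj
    exact hd.not_ge hdj
  refine (iInf₂_le β hne).trans (ENNReal.ofReal_le_ofReal ?_)
  gcongr
  exacts [hA β, hdj.trans (Finite.le_ciSup (fun k => |g β k|) j)]

theorem iInf_div_ciSup_abs_eq_iInf_min (hA : ∀ β, 0 ≤ A β) :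
    ⨅ β ∈ {β | g β ≠ 0}, ENNReal.ofReal (A β / (⨆ k, |g β k|) + L β)
      = ⨅ j, min (⨅ β ∈ {β | 0 < g β j}, ENNReal.ofReal (A β / g β j + L β))
                 (⨅ β ∈ {β | 0 < -g β j}, ENNReal.ofReal (A β / -g β j + L β)) := by
  apply le_antisymm
  · refine le_iInf fun j => le_min (le_iInf₂ fun β hβ => ?_) (le_iInf₂ fun β hβ => ?_)
    · exact iInf_div_ciSup_abs_le g L hA hβ (le_abs_self _)
    · exact iInf_div_ciSup_abs_le g L hA hβ (neg_le_abs _)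
  · refine le_iInf₂ fun β hβ => ?_
    obtain ⟨j, hpos, hsup⟩ := Finite.exists_abs_eq_ciSup_abs hβ
    refine (iInf_le _ j).trans ?_
    rw [hsup]
    rcases abs_choice (g β j) with h | h <;> rw [h] at hpos ⊢
    · exact (min_le_left _ _).trans (iInf₂_le β hpos)
    · exact (min_le_right _ _).trans (iInf₂_le β hpos)

end InfDivSupAbs

lemma sum_mul_mul_sub_mulVec_eq_transpose_mulVec {n p : ℕ} (X : Matrix (Fin n) (Fin p) ℝ)
    (Y : Fin n → ℝ) (β : Fin p → ℝ) (c : ℝ) (j : Fin p) :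
    ∑ i, c * X i j * (Y i - X.mulVec β i) = c * (Xᵀ.mulVec (Y - X.mulVec β)) j := by
  simp only [Matrix.mulVec, dotProduct, Matrix.transpose_apply, Pi.sub_apply, Finset.mul_sum]
  exact Finset.sum_congr rfl fun i _ => by ring

/-- **Correctness of the c-TREX reduction.** The global infimum (in `[0,∞]`) of the rescaled
TREX objective `‖Y − Xβ‖₂²/(φ‖Xᵀ(Y − Xβ)‖_∞) + ‖β‖₁` over `{β : Xᵀ(Y − Xβ) ≠ 0}`
equals the minimum over `j ∈ {1,…,p}` and `s ∈ {−1,+1}` of the subproblem values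
`P*(s·φ·x_j)`. -/
theorem ctrex_reduction (n p : ℕ) (X : Matrix (Fin n) (Fin p) ℝ) (Y : Fin n → ℝ)
    (φ : ℝ) (hφ : 0 < φ) :
    (⨅ β ∈ {β : Fin p → ℝ | Xᵀ.mulVec (Y - X.mulVec β) ≠ 0},
        ENNReal.ofReal ((∑ i, (Y i - X.mulVec β i) ^ 2) /
          (φ * ⨆ j, |(Xᵀ.mulVec (Y - X.mulVec β)) j|) + ∑ k, |β k|))
      = ⨅ j : Fin p,
          min (trexSubproblemValue n p X Y (fun i => φ * X i j))
              (trexSubproblemValue n p X Y (fun i => -φ * X i j)) := by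
  have key := iInf_div_ciSup_abs_eq_iInf_min (fun β => φ • Xᵀ.mulVec (Y - X.mulVec β))
    (fun β => ∑ k, |β k|) (A := fun β => ∑ i, (Y i - X.mulVec β i) ^ 2)
    (fun β => Finset.sum_nonneg fun i _ => sq_nonneg _)
  simp only [trexSubproblemValue, sum_mul_mul_sub_mulVec_eq_transpose_mulVec]
  simp only [neg_mul]
  simp only [ne_eq, smul_eq_zero, hφ.ne', false_or, Pi.smul_apply, smul_eq_mul, abs_mul,
    abs_of_pos hφ, ← Real.mul_iSup_of_nonneg hφ.le] at key
  exact key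
end

section
/- Convexity of each TREX subproblem: for any fixed v ∈ ℝ^n, the set H_v = {β ∈ ℝ^p : vᵀ(Y − Xβ) > 0} is convex, and the function g_v(β) = ‖Y − Xβ‖₂²/(vᵀ(Y − Xβ)) + ‖β‖₁ is convex on H_v. -/
/-!
The objective is the quadratic-over-linear function `(r, s) ↦ ‖r‖₂² / s`, jointly convex on
`s > 0`, precomposed with the affine map `β ↦ (Y − Xβ, vᵀ(Y − Xβ))`, plus the `ℓ¹` norm; `H_v` is
the preimage of `{s > 0}` under that same affine map. Joint convexity of `x² / s` comes from the
identity `(a s + b t)(a x²/s + b y²/t) − (a x + b y)² = a b s t (x/s − y/t)²`.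
-/

open Matrix BigOperators

theorem ConvexOn.sum {𝕜 E β ι : Type*} [Semiring 𝕜] [PartialOrder 𝕜] [AddCommMonoid E]
    [AddCommMonoid β] [PartialOrder β] [IsOrderedAddMonoid β] [SMul 𝕜 E] [Module 𝕜 β]
    {s : Set E} {f : ι → E → β} (t : Finset ι) (hs : Convex 𝕜 s)
    (hf : ∀ i ∈ t, ConvexOn 𝕜 s (f i)) : ConvexOn 𝕜 s fun x => ∑ i ∈ t, f i x := by
  classical
  induction t using Finset.induction_on with
  | empty => simpa using convexOn_const (0 : β) hs
  | insert j t hj ih =>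
    simp only [Finset.sum_insert hj]
    exact (hf j (t.mem_insert_self j)).add (ih fun i hi => hf i (Finset.mem_insert_of_mem hi))

theorem convexOn_sq_div : ConvexOn ℝ {q : ℝ × ℝ | 0 < q.2} fun q => q.1 ^ 2 / q.2 := by
  refine ⟨convex_halfSpace_gt (LinearMap.snd ℝ ℝ ℝ).isLinear 0, ?_⟩
  rintro ⟨x, s⟩ (hs : 0 < s) ⟨y, t⟩ (ht : 0 < t) a b ha hb hab
  obtain ⟨u, rfl⟩ : ∃ u, x = u * s := ⟨x / s, by field_simp⟩
  obtain ⟨w, rfl⟩ : ∃ w, y = w * t := ⟨y / t, by field_simp⟩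
  have hpos : 0 < a * s + b * t := by
    rcases ha.lt_or_eq with ha | rfl
    · positivity
    · simp_all
  simp only [Prod.smul_mk, Prod.mk_add_mk, smul_eq_mul]
  rw [div_le_iff₀ hpos]
  calc (a * (u * s) + b * (w * t)) ^ 2
      ≤ (a * (u * s) + b * (w * t)) ^ 2 + a * b * s * t * (u - w) ^ 2 :=
        le_add_of_nonneg_right (by positivity)
    _ = (a * ((u * s) ^ 2 / s) + b * ((w * t) ^ 2 / t)) * (a * s + b * t) := by
        field_simp
        ring

theorem convexOn_sum_sq_div {ι : Type*} [Fintype ι] :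
    ConvexOn ℝ {q : (ι → ℝ) × ℝ | 0 < q.2} fun q => (∑ i, q.1 i ^ 2) / q.2 := by
  simp only [Finset.sum_div]
  refine ConvexOn.sum _ (convex_halfSpace_gt (LinearMap.snd ℝ _ ℝ).isLinear 0) fun i _ => ?_
  exact convexOn_sq_div.comp_linearMap
    ((LinearMap.proj i : (ι → ℝ) →ₗ[ℝ] ℝ).prodMap (LinearMap.id : ℝ →ₗ[ℝ] ℝ))

theorem convexOn_sum_abs {ι : Type*} [Fintype ι] {s : Set (ι → ℝ)} (hs : Convex ℝ s) :
    ConvexOn ℝ s fun x => ∑ i, |x i| :=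
  ConvexOn.sum _ hs fun i _ => by
    simpa only [Function.comp_def, LinearMap.coe_proj, Function.eval, Real.norm_eq_abs] using
      (convexOn_univ_norm.comp_linearMap (LinearMap.proj i : (ι → ℝ) →ₗ[ℝ] ℝ)).subset
        (Set.subset_univ _) hs

/-- **Convexity of each TREX subproblem.** For any fixed `v ∈ ℝⁿ`, the half-space
`H_v = {β : vᵀ(Y − Xβ) > 0}` is convex, and the subproblem objective
`g_v(β) = ‖Y − Xβ‖₂²/(vᵀ(Y − Xβ)) + ‖β‖₁` is convex on `H_v`. -/
theorem trex_subproblem_convex (n p : ℕ) (X : Matrix (Fin n) (Fin p) ℝ)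
    (Y v : Fin n → ℝ) :
    Convex ℝ {β : Fin p → ℝ | 0 < ∑ i, v i * (Y i - X.mulVec β i)} ∧
    ConvexOn ℝ {β : Fin p → ℝ | 0 < ∑ i, v i * (Y i - X.mulVec β i)}
      (fun β => (∑ i, (Y i - X.mulVec β i) ^ 2) /
          (∑ i, v i * (Y i - X.mulVec β i)) + ∑ k, |β k|) := by
  let residual : (Fin p → ℝ) →ᵃ[ℝ] (Fin n → ℝ) :=
    AffineMap.const ℝ _ Y - X.mulVecLin.toAffineMap
  have hquot := convexOn_sum_sq_div.comp_affineMap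
    (residual.prod ((dotProductBilin ℝ ℝ v).toAffineMap.comp residual))
  exact ⟨hquot.1, hquot.add (convexOn_sum_abs hquot.1)⟩
end

section
/- Gram invariance of the knockoff swap: if X̃ ∈ ℝ^{n×p} is a knockoff matrix for X ∈ ℝ^{n×p}, then for every subset S ⊆ {1,…,p}, the swapped augmented matrix satisfies A_swap(S)ᵀ A_swap(S) = Aᵀ A, where A = [X X̃]. -/
/-!
Permuting the columns of `A` conjugates its Gram matrix by the same permutation. The Gram
matrix of `[X X̃]` is the block matrix `[[G, G - D], [G - D, G]]` with `G = XᵀX` and `D`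
diagonal, and the swap only ever exchanges an entry of `G` with the entry of `G - D` at an
index pair `(i, j)` with exactly one of `i, j` in `S`, i.e. off the diagonal, where they agree.
-/

open Matrix BigOperators

def knockoffSwap {p : ℕ} (S : Finset (Fin p)) : Fin p ⊕ Fin p → Fin p ⊕ Fin p
  | Sum.inl j => if j ∈ S then Sum.inr j else Sum.inl j
  | Sum.inr j => if j ∈ S then Sum.inl j else Sum.inr j

namespace Matrix

variable {l m n α : Type*} [Fintype m]

theorem transpose_submatrix_mul_submatrix_id [NonUnitalNonAssocSemiring α] (A : Matrix m n α)
    (e : l → n) :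
    (A.submatrix id e)ᵀ * A.submatrix id e = (Aᵀ * A).submatrix e e := by
  rw [transpose_submatrix, submatrix_mul _ _ e id e Function.bijective_id]

theorem transpose_fromCols_mul_fromCols [Semiring α] [Fintype n] (X Y : Matrix m n α) :
    (fromCols X Y)ᵀ * fromCols X Y = fromBlocks (Xᵀ * X) (Xᵀ * Y) (Yᵀ * X) (Yᵀ * Y) := by
  rw [transpose_fromCols, fromRows_mul_fromCols]

end Matrix

theorem fromBlocks_submatrix_knockoffSwap {p : ℕ} {α : Type*} (A B : Matrix (Fin p) (Fin p) α)
    (hAB : ∀ i j, i ≠ j → B i j = A i j) (S : Finset (Fin p)) :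
    (fromBlocks A B B A).submatrix (knockoffSwap S) (knockoffSwap S) = fromBlocks A B B A := by
  ext (i | i) (j | j) <;> by_cases hi : i ∈ S <;> by_cases hj : j ∈ S <;>
    simp only [submatrix_apply, knockoffSwap, hi, hj, if_true, if_false, fromBlocks_apply₁₁,
      fromBlocks_apply₁₂, fromBlocks_apply₂₁, fromBlocks_apply₂₂]
  all_goals first
    | rfl
    | exact hAB i j (by rintro rfl; contradiction)
    | exact (hAB i j (by rintro rfl; contradiction)).symm

theorem knockoff_swap_gram_invariant_general (n p : ℕ)
    (X Xt : Matrix (Fin n) (Fin p) ℝ) (s : Fin p → ℝ)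
    (hk1 : Xtᵀ * Xt = Xᵀ * X)
    (hk2 : Xᵀ * Xt = Xᵀ * X - Matrix.diagonal s)
    (S : Finset (Fin p)) :
    ((Matrix.fromCols X Xt).submatrix id (knockoffSwap S))ᵀ *
        (Matrix.fromCols X Xt).submatrix id (knockoffSwap S)
      = (Matrix.fromCols X Xt)ᵀ * Matrix.fromCols X Xt := by
  have hsymm : Xtᵀ * X = Xᵀ * Xt := by
    rw [← transpose_transpose (Xtᵀ * X), transpose_mul, transpose_transpose, hk2,
      transpose_sub, transpose_mul, transpose_transpose, diagonal_transpose]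
  have hoffDiag : ∀ i j, i ≠ j → (Xᵀ * Xt) i j = (Xᵀ * X) i j := fun i j hij => by
    rw [hk2, Matrix.sub_apply, diagonal_apply_ne _ hij, sub_zero]
  rw [transpose_submatrix_mul_submatrix_id, transpose_fromCols_mul_fromCols, hsymm, hk1]
  exact fromBlocks_submatrix_knockoffSwap _ _ hoffDiag S

/-- **Gram invariance of the knockoff swap.** If `X̃` is a knockoff matrix for `X`
(i.e. `X̃ᵀX̃ = XᵀX` and `XᵀX̃ = XᵀX − diag(s)` with `s ≥ 0`), then for every subset `S`
of `{1,…,p}`, the swapped augmented matrix `A_swap(S)` (where `A = [X X̃]`) satisfies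
`A_swap(S)ᵀ A_swap(S) = Aᵀ A`. -/
theorem knockoff_swap_gram_invariant (n p : ℕ)
    (X Xt : Matrix (Fin n) (Fin p) ℝ) (s : Fin p → ℝ)
    (hk1 : Xtᵀ * Xt = Xᵀ * X)
    (hk2 : Xᵀ * Xt = Xᵀ * X - Matrix.diagonal s)
    (hk3 : ∀ j, 0 ≤ s j)
    (S : Finset (Fin p)) :
    ((Matrix.fromCols X Xt).submatrix id (knockoffSwap S))ᵀ *
        (Matrix.fromCols X Xt).submatrix id (knockoffSwap S)
      = (Matrix.fromCols X Xt)ᵀ * Matrix.fromCols X Xt :=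
  knockoff_swap_gram_invariant_general n p X Xt s hk1 hk2 S
end

section
/- Null-coefficient invariance under the knockoff rotation: let X̃ be a knockoff matrix for X, S ⊆ {1,…,p}, and let R ∈ ℝ^{n×n} be orthogonal with R[X X̃] = [X X̃]_swap(S). Then for every β ∈ ℝ^p with β_j = 0 for all j ∈ S, one has Rᵀ(Xβ) = Xβ. -/
open Matrix

/-
A coefficient vector `β` vanishing on `S` lifts to the vector `(β, 0)` on the columns of `[X X̃]`,
and this lift is unchanged by the swap of `S`. Hence `R (Xβ) = [X X̃]_swap(S) (β, 0) = [X X̃] (β, 0) = Xβ`,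
and applying `Rᵀ` with `Rᵀ R = 1` gives `Xβ = Rᵀ (Xβ)`.
-/

lemma knockoffSwap_involutive {p : ℕ} (S : Finset (Fin p)) :
    Function.Involutive (knockoffSwap S) := by
  rintro (j | j) <;> by_cases h : j ∈ S <;> simp [knockoffSwap, h]

lemma sumElim_zero_comp_knockoffSwap {α : Type*} [Zero α] {p : ℕ} {S : Finset (Fin p)}
    {β : Fin p → α} (hβ : ∀ j ∈ S, β j = 0) :
    Sum.elim β 0 ∘ knockoffSwap S = Sum.elim β 0 := by
  funext x
  rcases x with j | j <;> by_cases h : j ∈ S <;> simp [knockoffSwap, h, hβ]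

lemma submatrix_knockoffSwap_mulVec_sumElim_zero {m α : Type*} [NonUnitalNonAssocSemiring α]
    {p : ℕ} {S : Finset (Fin p)} (A : Matrix m (Fin p ⊕ Fin p) α)
    {β : Fin p → α} (hβ : ∀ j ∈ S, β j = 0) :
    A.submatrix id (knockoffSwap S) *ᵥ Sum.elim β 0 = A *ᵥ Sum.elim β 0 := by
  rw [← (knockoffSwap_involutive S).coe_toPerm, submatrix_mulVec_equiv,
    Function.Involutive.toPerm_symm, Function.Involutive.coe_toPerm,
    sumElim_zero_comp_knockoffSwap hβ, Function.comp_id]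

lemma fromCols_mulVec_sumElim_zero {m n₁ n₂ α : Type*} [Fintype n₁] [Fintype n₂]
    [Semiring α] (A₁ : Matrix m n₁ α) (A₂ : Matrix m n₂ α) (v : n₁ → α) :
    fromCols A₁ A₂ *ᵥ Sum.elim v 0 = A₁ *ᵥ v := by
  rw [fromCols_mulVec_sumElim, mulVec_zero, add_zero]

lemma transpose_mulVec_eq_self_of_mulVec_eq_self {n α : Type*} [Fintype n] [DecidableEq n]
    [Semiring α] {R : Matrix n n α} (hR : Rᵀ * R = 1) {x : n → α} (hx : R *ᵥ x = x) :
    Rᵀ *ᵥ x = x := by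
  conv_lhs => rw [← hx]
  rw [mulVec_mulVec, hR, one_mulVec]

theorem knockoff_rotation_null_invariance_general (n p : ℕ)
    (X Xt : Matrix (Fin n) (Fin p) ℝ)
    (S : Finset (Fin p))
    (R : Matrix (Fin n) (Fin n) ℝ) (hRorth : Rᵀ * R = 1)
    (hR : R * Matrix.fromCols X Xt
      = (Matrix.fromCols X Xt).submatrix id (knockoffSwap S))
    (β : Fin p → ℝ) (hβ : ∀ j ∈ S, β j = 0) :
    Rᵀ.mulVec (X.mulVec β) = X.mulVec β := by
  refine transpose_mulVec_eq_self_of_mulVec_eq_self hRorth ?_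
  calc R *ᵥ (X *ᵥ β) = R *ᵥ (fromCols X Xt *ᵥ Sum.elim β 0) := by
        rw [fromCols_mulVec_sumElim_zero]
    _ = (fromCols X Xt).submatrix id (knockoffSwap S) *ᵥ Sum.elim β 0 := by
        rw [mulVec_mulVec, hR]
    _ = X *ᵥ β := by
        rw [submatrix_knockoffSwap_mulVec_sumElim_zero _ hβ, fromCols_mulVec_sumElim_zero]

/-- **Null-coefficient invariance under the knockoff rotation.** Let `X̃` be a knockoff
matrix for `X`, `S ⊆ {1,…,p}`, and `R` orthogonal with `R [X X̃] = [X X̃]_swap(S)`.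
Then for every `β` vanishing on `S`, one has `Rᵀ(Xβ) = Xβ`. -/
theorem knockoff_rotation_null_invariance (n p : ℕ)
    (X Xt : Matrix (Fin n) (Fin p) ℝ) (s : Fin p → ℝ)
    (hk1 : Xtᵀ * Xt = Xᵀ * X)
    (hk2 : Xᵀ * Xt = Xᵀ * X - Matrix.diagonal s)
    (hk3 : ∀ j, 0 ≤ s j)
    (S : Finset (Fin p))
    (R : Matrix (Fin n) (Fin n) ℝ) (hRorth : Rᵀ * R = 1)
    (hR : R * Matrix.fromCols X Xt
      = (Matrix.fromCols X Xt).submatrix id (knockoffSwap S))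
    (β : Fin p → ℝ) (hβ : ∀ j ∈ S, β j = 0) :
    Rᵀ.mulVec (X.mulVec β) = X.mulVec β :=
  knockoff_rotation_null_invariance_general n p X Xt S R hRorth hR β hβ
end
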